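/- Let q be a prime power, F a finite extension field of GF(q), and let G ∈ F[X] be a separable (squarefree) polynomial. Let α₁, …, αₙ be pairwise distinct elements of F with G(αᵢ) ≠ 0 for all i. Then the q-ary Goppa codes Γ(L, G^{q−1}) and Γ(L, G^q) coincide; that is, for every c ∈ GF(q)ⁿ, G(X)^{q−1} divides Σᵢ cᵢ ∏_{j≠i}(X − αⱼ) in F[X] if and only if G(X)^q divides Σᵢ cᵢ ∏_{j≠i}(X − αⱼ) in F[X]. -/

import Mathlib

/-!
Pass to an algebraic closure, where `G` splits with simple roots (`F` is perfect, so squarefree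
means separable); then `G ^ k` divides the syndrome polynomial `S = Σᵢ cᵢ ∏_{j≠i} (X − αⱼ)`
iff every `(X − β) ^ k` with `G(β) = 0` does.
Near such a root, `S / ∏ⱼ (X − αⱼ) = Σᵢ cᵢ / (X − αᵢ) = −Σ_d t_d (X − β) ^ d` with
`t_d = Σᵢ cᵢ (αᵢ − β) ^ (−(d + 1))`, so `(X − β) ^ k ∣ S` iff `t_0 = ⋯ = t_{k−1} = 0`.
Because the `cᵢ` lie in `GF(q)`, the `q`-power Frobenius gives `t_{q−1} = t_0 ^ q`: vanishing
up to order `q − 1` forces vanishing up to order `q`.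
-/

open Polynomial

/-- The syndrome polynomial `Σᵢ cᵢ ∏_{j≠i} (X − αⱼ)` of a word `c ∈ GF(q)ⁿ` with respect to
the locator tuple `α`, with coefficients viewed in the extension field `F`. -/
noncomputable def goppaSum {K F : Type*} [Field K] [Field F] [Algebra K F] {n : ℕ}
    (α : Fin n → F) (c : Fin n → K) : Polynomial F :=
  ∑ i, Polynomial.C (algebraMap K F (c i)) *
    ∏ j ∈ Finset.univ.erase i, (Polynomial.X - Polynomial.C (α j))

section

variable {K E : Type*} [Field K] [Field E] [Algebra K E] {n : ℕ}

theorem goppaSum_map_algebraMap {F : Type*} [Field F] [Algebra K F] [Algebra F E]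
    [IsScalarTower K F E] (α : Fin n → F) (c : Fin n → K) :
    (goppaSum α c).map (algebraMap F E) = goppaSum (algebraMap F E ∘ α) c := by
  simp [goppaSum, Polynomial.map_sum, Polynomial.map_prod, ← IsScalarTower.algebraMap_apply]

theorem goppaSum_comp_X_add_C (α : Fin n → E) (c : Fin n → K) (β : E) :
    (goppaSum α c).comp (X + C β) = goppaSum (fun i => α i - β) c := by
  simp only [goppaSum, sum_comp, mul_comp, C_comp, prod_comp, sub_comp, X_comp, C_sub]
  congr! 3 with i - j
  ring

/-- `invUnitsSub u` is the power series of `1 / (u - X)`. -/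
theorem coe_goppaSum_eq_mul_sum_invUnitsSub {α : Fin n → E} (hα : ∀ i, α i ≠ 0)
    (c : Fin n → K) :
    (goppaSum α c : PowerSeries E) = -((∏ j, (X - C (α j)) : E[X]) : PowerSeries E) *
      ∑ i, PowerSeries.C (algebraMap K E (c i)) *
        PowerSeries.invUnitsSub (Units.mk0 (α i) (hα i)) := by
  simp only [goppaSum, ← coeToPowerSeries.ringHom_apply, map_sum, Finset.mul_sum]
  refine Finset.sum_congr rfl fun i _ => ?_
  have hinv := PowerSeries.invUnitsSub_mul_sub (Units.mk0 (α i) (hα i))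
  rw [Units.val_mk0] at hinv
  rw [← Finset.mul_prod_erase _ _ (Finset.mem_univ i)]
  simp only [map_mul, map_sub, coeToPowerSeries.ringHom_apply, coe_X, coe_C]
  set P : PowerSeries E := ((∏ j ∈ Finset.univ.erase i, (X - C (α j)) : E[X]) : PowerSeries E)
  linear_combination -(PowerSeries.C (algebraMap K E (c i)) * P) * hinv

theorem X_pow_dvd_goppaSum_iff {α : Fin n → E} (hα : ∀ i, α i ≠ 0) (c : Fin n → K) (k : ℕ) :
    X ^ k ∣ goppaSum α c ↔ ∀ d < k, ∑ i, c i • (α i)⁻¹ ^ (d + 1) = 0 := by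
  have hunit : IsUnit (-((∏ j, (X - C (α j)) : E[X]) : PowerSeries E)) := by
    rw [PowerSeries.isUnit_iff_constantCoeff]
    simp [coeff_zero_eq_eval_zero, eval_prod, Finset.prod_eq_zero_iff, hα]
  calc X ^ k ∣ goppaSum α c ↔ PowerSeries.X ^ k ∣ (goppaSum α c : PowerSeries E) := by
        simp only [X_pow_dvd_iff, PowerSeries.X_pow_dvd_iff, coeff_coe]
    _ ↔ _ := by
        rw [coe_goppaSum_eq_mul_sum_invUnitsSub hα, hunit.dvd_mul_left, PowerSeries.X_pow_dvd_iff]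
        simp [Algebra.smul_def]

variable [Fintype K]

theorem X_pow_card_dvd_goppaSum {α : Fin n → E} (hα : ∀ i, α i ≠ 0) {c : Fin n → K}
    (h : X ^ (Fintype.card K - 1) ∣ goppaSum α c) : X ^ Fintype.card K ∣ goppaSum α c := by
  have hq : 1 < Fintype.card K := Fintype.one_lt_card
  rw [X_pow_dvd_goppaSum_iff hα] at h ⊢
  intro d hd
  obtain hd | rfl : d < Fintype.card K - 1 ∨ d = Fintype.card K - 1 := by omega
  · exact h d hd
  · have := congrArg (FiniteField.frobeniusAlgHom K E) (h 0 (by omega))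
    simpa [map_sum, Nat.sub_add_cancel hq.le] using this

theorem X_sub_C_pow_card_dvd_goppaSum {α : Fin n → E} {β : E} (hβ : ∀ i, α i ≠ β)
    {c : Fin n → K} (h : (X - C β) ^ (Fintype.card K - 1) ∣ goppaSum α c) :
    (X - C β) ^ Fintype.card K ∣ goppaSum α c := by
  rw [X_sub_C_pow_dvd_iff, goppaSum_comp_X_add_C] at h ⊢
  exact X_pow_card_dvd_goppaSum (fun i => sub_ne_zero.mpr (hβ i)) h

end

theorem Polynomial.Separable.pow_dvd_iff_of_splits {E : Type*} [Field E] {g f : E[X]}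
    (hg : g.Separable) (hs : g.Splits) (k : ℕ) :
    g ^ k ∣ f ↔ ∀ β ∈ g.roots, (X - C β) ^ k ∣ f := by
  classical
  refine ⟨fun h β hβ =>
    (pow_dvd_pow_of_dvd (dvd_iff_isRoot.mpr (isRoot_of_mem_roots hβ)) k).trans h, fun h => ?_⟩
  have hprod : (∏ β ∈ g.roots.toFinset, (X - C β) ^ k) ∣ f :=
    Finset.prod_dvd_of_coprime
      (fun a _ b _ hab => (pairwise_coprime_X_sub_C Function.injective_id hab).pow)
      fun β hβ => h β (Multiset.mem_toFinset.mp hβ)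
  have hassoc : Associated (g ^ k) (∏ β ∈ g.roots.toFinset, (X - C β) ^ k) := by
    rw [Finset.prod_pow, Finset.prod_eq_multiset_prod, Multiset.toFinset_val,
      (nodup_roots hg).dedup]
    refine Associated.pow_pow ?_
    conv_lhs => rw [hs.eq_prod_roots]
    exact associated_unit_mul_left _ _
      (isUnit_C.mpr (leadingCoeff_ne_zero.mpr hg.ne_zero).isUnit)
  exact hassoc.dvd.trans hprod

theorem goppa_code_sep_pow_q_eq_pow_q_sub_one_general {K F : Type*} [Field K] [Fintype K]
    [Field F] [Fintype F] [Algebra K F] {n : ℕ}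
    (G : Polynomial F) (hsq : Squarefree G)
    (α : Fin n → F)
    (heval : ∀ i, G.eval (α i) ≠ 0)
    (c : Fin n → K) :
    (G ^ (Fintype.card K - 1) ∣ goppaSum α c) ↔
      (G ^ (Fintype.card K) ∣ goppaSum α c) := by
  let φ := algebraMap F (AlgebraicClosure F)
  refine ⟨fun h => ?_, (pow_dvd_pow G (Nat.sub_le _ 1)).trans⟩
  have hsep : (G.map φ).Separable := (PerfectField.separable_iff_squarefree.mpr hsq).map
  rw [← map_dvd_map' φ, Polynomial.map_pow, goppaSum_map_algebraMap,
    hsep.pow_dvd_iff_of_splits (IsAlgClosed.splits _)] at h ⊢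
  refine fun β hβ => X_sub_C_pow_card_dvd_goppaSum (fun i hi => heval i ?_) (h β hβ)
  have hroot := (mem_roots'.mp hβ).2
  rwa [← hi, IsRoot, eval_map, Function.comp_apply, eval₂_at_apply, map_eq_zero] at hroot

/-- for a separable polynomial `G`, the Goppa codes `Γ(L, G^{q−1})` and
`Γ(L, G^q)` coincide, where `q = |GF(q)|`. -/
theorem goppa_code_sep_pow_q_eq_pow_q_sub_one {K F : Type*} [Field K] [Fintype K]
    [Field F] [Fintype F] [Algebra K F] {n : ℕ}
    (G : Polynomial F) (hsq : Squarefree G)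
    (α : Fin n → F) (hα : Function.Injective α)
    (heval : ∀ i, G.eval (α i) ≠ 0)
    (c : Fin n → K) :
    (G ^ (Fintype.card K - 1) ∣ goppaSum α c) ↔
      (G ^ (Fintype.card K) ∣ goppaSum α c) :=
  goppa_code_sep_pow_q_eq_pow_q_sub_one_general G hsq α heval c
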